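/- arXiv:hep-th/0111255 — 2 statements merged into one kernel-verified Lean document; each statement's English description precedes it below -/
import Mathlib

section
/- The image of A₁ under the coordinate map z ↦ z^d is exactly the cut-plane ℂ ∖ [−1,1], where [−1,1] denotes the real segment {t ∈ ℝ : −1 ≤ t ≤ 1} regarded as a subset of ℂ. -/
noncomputable section
open Matrix Complex

namespace AdS

/-- The metric signs: +1 for indices 0 and d, −1 otherwise. -/
def eta (d : ℕ) (μ : Fin (d+1)) : ℝ := if μ = 0 ∨ μ = Fin.last d then 1 else -1

/-- The AdS bilinear form on ℝ^{d+1}. -/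
def formR (d : ℕ) (x y : Fin (d+1) → ℝ) : ℝ := ∑ μ, eta d μ * x μ * y μ

/-- The ℂ-bilinear extension of the AdS form to ℂ^{d+1}. -/
def formC (d : ℕ) (z w : Fin (d+1) → ℂ) : ℂ := ∑ μ, (eta d μ : ℂ) * z μ * w μ

/-- The real AdS quadric. -/
def Xd (d : ℕ) : Set (Fin (d+1) → ℝ) := {x | formR d x x = 1}

/-- The complex AdS quadric. -/
def XdC (d : ℕ) : Set (Fin (d+1) → ℂ) := {z | formC d z z = 1}

/-- ℓ(a∧b) : x ↦ ⟨b,x⟩a − ⟨a,x⟩b as a matrix. -/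
def ell (d : ℕ) (a b : Fin (d+1) → ℝ) : Matrix (Fin (d+1)) (Fin (d+1)) ℝ :=
  Matrix.of fun i j => eta d j * (b j * a i - a j * b i)

/-- The AdS group. -/
def Ggrp (d : ℕ) : Set (Matrix (Fin (d+1)) (Fin (d+1)) ℝ) :=
  {Λ | ∀ x y, formR d (Λ.mulVec x) (Λ.mulVec y) = formR d x y}

/-- The connected component of the identity of the AdS group. -/
def G0 (d : ℕ) : Set (Matrix (Fin (d+1)) (Fin (d+1)) ℝ) :=
  connectedComponentIn (Ggrp d) 1

/-- The set C₁ of Lie algebra generators. -/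
def C1 (d : ℕ) : Set (Matrix (Fin (d+1)) (Fin (d+1)) ℝ) :=
  {M | ∃ a b : Fin (d+1) → ℝ, formR d a a = 1 ∧ formR d b b = 1 ∧ formR d a b = 0 ∧
    0 < a 0 * b (Fin.last d) - a (Fin.last d) * b 0 ∧ M = ell d a b}

/-- The cone C₊ generated by C₁. -/
def Cplus (d : ℕ) : Set (Matrix (Fin (d+1)) (Fin (d+1)) ℝ) :=
  {M | ∃ ρ : ℝ, 0 < ρ ∧ ∃ N ∈ C1 d, M = ρ • N}

/-- A real matrix viewed as a complex one. -/
def toC (d : ℕ) (M : Matrix (Fin (d+1)) (Fin (d+1)) ℝ) : Matrix (Fin (d+1)) (Fin (d+1)) ℂ :=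
  M.map Complex.ofReal

/-- A real vector viewed as a complex one. -/
def toCv (d : ℕ) (x : Fin (d+1) → ℝ) : Fin (d+1) → ℂ := fun μ => (x μ : ℂ)

/-- The generator M₀d = ℓ(e₀ ∧ e_d). -/
def M0d (d : ℕ) : Matrix (Fin (d+1)) (Fin (d+1)) ℝ :=
  ell d (Pi.single 0 1) (Pi.single (Fin.last d) 1)

/-- The future tuboid Z₁₊ of the complex AdS quadric. -/
def Z1plus (d : ℕ) : Set (Fin (d+1) → ℂ) :=
  {z | ∃ M ∈ C1 d, ∃ c ∈ Xd d, ∃ τ : ℂ, 0 < τ.im ∧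
    z = (NormedSpace.exp (τ • toC d M)).mulVec (toCv d c)}

/-- The past tuboid Z₁₋ of the complex AdS quadric. -/
def Z1minus (d : ℕ) : Set (Fin (d+1) → ℂ) :=
  {z | ∃ M ∈ C1 d, ∃ c ∈ Xd d, ∃ τ : ℂ, τ.im < 0 ∧
    z = (NormedSpace.exp (τ • toC d M)).mulVec (toCv d c)}
/-- The set A₁ = {x+iy : ⟨x,x⟩−⟨y,y⟩ = 1, ⟨x,y⟩ = 0, ⟨y,y⟩ > 0, y⁰x^d − x⁰y^d > 0}. -/
def A1 (d : ℕ) : Set (Fin (d+1) → ℂ) :=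
  {z | formR d (fun μ => (z μ).re) (fun μ => (z μ).re)
        - formR d (fun μ => (z μ).im) (fun μ => (z μ).im) = 1 ∧
      formR d (fun μ => (z μ).re) (fun μ => (z μ).im) = 0 ∧
      0 < formR d (fun μ => (z μ).im) (fun μ => (z μ).im) ∧
      0 < (z 0).im * (z (Fin.last d)).re - (z 0).re * (z (Fin.last d)).im}

/-! If `z = x + iy ∈ A₁` has real last coordinate `t`, then `y` is timelike in the Minkowski space
spanned by `e₀` and the spacelike directions, so `x`, being orthogonal to `y`, is spacelike there
(reversed Cauchy–Schwarz), and `⟨x,x⟩ − ⟨y,y⟩ = 1` forces `t² > 1`. Conversely, for `w` off the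
segment pick `u` with `u² + w² = 1` and put `z = u e₀ + w e_d`; `u` is not a real multiple of `w`
(otherwise `w² = 1/(1 + λ²) ∈ (0, 1]`), so the sign of `u` can be chosen to fix the orientation. -/

theorem sq_le_sum_sq_of_mul_eq_sum_mul {ι : Type*} (s : Finset ι) (f g : ι → ℝ) {a b : ℝ}
    (horth : a * b = ∑ i ∈ s, f i * g i) (htime : ∑ i ∈ s, g i ^ 2 < b ^ 2) :
    a ^ 2 ≤ ∑ i ∈ s, f i ^ 2 := by
  have hb : 0 < b ^ 2 := (s.sum_nonneg fun i _ => sq_nonneg (g i)).trans_lt htime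
  refine le_of_mul_le_mul_right ?_ hb
  calc a ^ 2 * b ^ 2 = (∑ i ∈ s, f i * g i) ^ 2 := by rw [← horth]; ring
    _ ≤ (∑ i ∈ s, f i ^ 2) * ∑ i ∈ s, g i ^ 2 := s.sum_mul_sq_le_sq_mul_sq f g
    _ ≤ (∑ i ∈ s, f i ^ 2) * b ^ 2 :=
      mul_le_mul_of_nonneg_left htime.le (s.sum_nonneg fun i _ => sq_nonneg (f i))

section

variable {d : ℕ}

def spaceIndices (d : ℕ) : Finset (Fin (d+1)) := Finset.univ \ {0, Fin.last d}

lemma zero_ne_last (hd : d ≠ 0) : (0 : Fin (d+1)) ≠ Fin.last d := by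
  simpa [Fin.ext_iff] using hd.symm

lemma formR_eq_sub_sum_spaceIndices (hd : d ≠ 0) (f g : Fin (d+1) → ℝ) :
    formR d f g =
      f 0 * g 0 + f (Fin.last d) * g (Fin.last d) - ∑ μ ∈ spaceIndices d, f μ * g μ := by
  have hspace : ∀ μ ∈ spaceIndices d, eta d μ * f μ * g μ = -(f μ * g μ) := fun μ hμ => by
    simp_all [spaceIndices, eta]
  rw [formR, ← Finset.sum_sdiff (Finset.subset_univ {0, Fin.last d}), ← spaceIndices,
    Finset.sum_congr rfl hspace, Finset.sum_neg_distrib, Finset.sum_pair (zero_ne_last hd)]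
  simp [eta]
  ring

lemma formR_eq_of_forall_spaceIndices_eq_zero (hd : d ≠ 0) {f : Fin (d+1) → ℝ}
    (hf : ∀ μ ∈ spaceIndices d, f μ = 0) (g : Fin (d+1) → ℝ) :
    formR d f g = f 0 * g 0 + f (Fin.last d) * g (Fin.last d) := by
  rw [formR_eq_sub_sum_spaceIndices hd, Finset.sum_eq_zero fun μ hμ => by rw [hf μ hμ, zero_mul],
    sub_zero]

lemma one_lt_sq_re_last_of_mem_A1 (hd : d ≠ 0) {z : Fin (d+1) → ℂ} (hz : z ∈ A1 d)
    (him : (z (Fin.last d)).im = 0) : 1 < (z (Fin.last d)).re ^ 2 := by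
  obtain ⟨hnorm, horth, htime, -⟩ := hz
  simp only [formR_eq_sub_sum_spaceIndices hd, him] at hnorm horth htime
  have hspacelike : (z 0).re ^ 2 ≤ ∑ μ ∈ spaceIndices d, (z μ).re ^ 2 :=
    sq_le_sum_sq_of_mul_eq_sum_mul (b := (z 0).im) _ _ (fun μ => (z μ).im) (by linarith)
      (by simp only [sq]; linarith)
  simp only [sq] at *
  linarith

lemma mem_segment_of_sq_add_sq_eq_one {u w : ℂ} (h : u ^ 2 + w ^ 2 = 1)
    (hpar : u.im * w.re - u.re * w.im = 0) :
    w ∈ (fun t : ℝ => (t : ℂ)) '' Set.Icc (-1 : ℝ) 1 := by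
  have hre := congrArg re h
  have him := congrArg im h
  simp only [sq, add_re, add_im, mul_re, mul_im, one_re, one_im] at hre him
  have key : w.re * (u.im ^ 2 + w.im ^ 2) = 0 := by
    linear_combination u.im * hpar + w.im * him / 2
  have hw_im : w.im = 0 := by
    by_contra hw_im_ne
    have hwre : w.re = 0 := by
      simpa [(by positivity : u.im ^ 2 + w.im ^ 2 ≠ 0)] using key
    have hure : u.re = 0 := by simpa [hwre, hw_im_ne] using hpar
    nlinarith [sq_nonneg u.im]
  have hsq : w.re ^ 2 ≤ 1 := by
    simp only [hw_im] at key hre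
    rcases mul_eq_zero.mp key with hwre | hu_im
    · simp [hwre]
    · have : u.im = 0 := by simpa using hu_im
      nlinarith [mul_self_nonneg u.re]
  exact ⟨w.re, abs_le.mp (abs_le_one_iff_mul_self_le_one.mpr (by nlinarith)),
    Complex.ext (by simp) (by simp [hw_im])⟩

lemma exists_sq_add_sq_eq_one {w : ℂ} (hw : w ∉ (fun t : ℝ => (t : ℂ)) '' Set.Icc (-1 : ℝ) 1) :
    ∃ u : ℂ, u ^ 2 + w ^ 2 = 1 ∧ 0 < u.im * w.re - u.re * w.im := by
  obtain ⟨s, hs⟩ := IsAlgClosed.exists_pow_nat_eq (1 - w ^ 2) two_pos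
  have hs' : s ^ 2 + w ^ 2 = 1 := by rw [hs]; ring
  rcases lt_trichotomy (s.im * w.re - s.re * w.im) 0 with hneg | hzero | hpos
  · exact ⟨-s, by rw [neg_sq, hs'], by simp only [neg_re, neg_im]; linarith⟩
  · exact absurd (mem_segment_of_sq_add_sq_eq_one hs' hzero) hw
  · exact ⟨s, hs', hpos⟩

lemma single_add_single_mem_A1 (hd : d ≠ 0) {u w : ℂ} (h : u ^ 2 + w ^ 2 = 1)
    (hor : 0 < u.im * w.re - u.re * w.im) :
    Pi.single 0 u + Pi.single (Fin.last d) w ∈ A1 d := by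
  set z : Fin (d+1) → ℂ := Pi.single 0 u + Pi.single (Fin.last d) w
  have hz0 : z 0 = u := by simp [z, zero_ne_last hd]
  have hzl : z (Fin.last d) = w := by simp [z, (zero_ne_last hd).symm]
  have hspace : ∀ μ ∈ spaceIndices d, z μ = 0 := fun μ hμ => by simp_all [z, spaceIndices]
  have hx := formR_eq_of_forall_spaceIndices_eq_zero hd (f := fun μ => (z μ).re) fun μ hμ => by
    simp [hspace μ hμ]
  have hy := formR_eq_of_forall_spaceIndices_eq_zero hd (f := fun μ => (z μ).im) fun μ hμ => by
    simp [hspace μ hμ]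
  have hre := congrArg re h
  have him := congrArg im h
  simp only [sq, add_re, add_im, mul_re, mul_im, one_re, one_im] at hre him
  have hcausal : 0 < u.im ^ 2 + w.im ^ 2 := by
    by_contra! hle
    have hu : u.im = 0 := by nlinarith [sq_nonneg u.im, sq_nonneg w.im]
    have hw : w.im = 0 := by nlinarith [sq_nonneg u.im, sq_nonneg w.im]
    simp [hu, hw] at hor
  refine ⟨?_, ?_, ?_, ?_⟩ <;> simp only [hx, hy, hz0, hzl]
  · linarith
  · linarith
  · linarith
  · exact hor

end

/-- the image of `A₁` under `z ↦ z^d` is the cut-plane `ℂ ∖ [−1,1]`. -/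
theorem A1_last_coordinate_image (d : ℕ) (hd : 2 ≤ d) :
    (fun z : Fin (d+1) → ℂ => z (Fin.last d)) '' A1 d
      = ((fun t : ℝ => (t : ℂ)) '' Set.Icc (-1 : ℝ) 1)ᶜ := by
  have hd0 : d ≠ 0 := by omega
  refine Set.Subset.antisymm ?_ fun w hw => ?_
  · rintro _ ⟨z, hz, rfl⟩ ⟨t, ht, hzt⟩
    dsimp only at hzt
    have h := one_lt_sq_re_last_of_mem_A1 hd0 hz (by rw [← hzt, ofReal_im])
    rw [← hzt, ofReal_re] at h
    nlinarith [ht.1, ht.2]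
  · obtain ⟨u, hu, hor⟩ := exists_sq_add_sq_eq_one hw
    exact ⟨_, single_add_single_mem_A1 hd0 hu hor, by simp [(zero_ne_last hd0).symm]⟩

end AdS
end
end

section
/- For every integer n ≥ 1, the set Z_{n+} is an open subset of (X_d^{(c)})ⁿ, where (X_d^{(c)})ⁿ carries the topology induced from (ℂ^{d+1})ⁿ. -/
/-!
Induction on `n`. A point of `Z_{(n+1)+}` is `z₀ = exp (i t M) c` followed by `exp (i t M)` applied
to a point of `Z_{n+}`. Near `z₀` the data `(t, M, c)` with `ζ = exp (i t M) c` can be chosen to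
depend continuously on `ζ ∈ X_d^{(c)}`; then `exp (-i t M)` moves the remaining points
continuously back into a neighbourhood of a point of `Z_{n+}`, where the induction hypothesis
applies. All computations with `exp (i t M)` rest on `M³ = -M` for `M ∈ C₁`, which gives
`exp (i t M) = 1 + i sinh t M + (1 - cosh t) M²`.
-/

noncomputable section
open Matrix Complex

namespace AdS

/-- The ordered product `A 0 * A 1 * ⋯ * A j` of matrices. -/
def prodUpTo {d n : ℕ} (A : Fin n → Matrix (Fin (d+1)) (Fin (d+1)) ℂ) (j : Fin n) :
    Matrix (Fin (d+1)) (Fin (d+1)) ℂ :=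
  (((List.finRange n).take (j.1 + 1)).map A).prod

/-- The minimal n-point future tuboid Z_{n+}. -/
def Znplus (d n : ℕ) : Set (Fin n → (Fin (d+1) → ℂ)) :=
  {z | (∀ j, z j ∈ XdC d) ∧
    ∃ (t : Fin n → ℝ) (M : Fin n → Matrix (Fin (d+1)) (Fin (d+1)) ℝ)
      (c : Fin n → (Fin (d+1) → ℝ)),
      (∀ j, 0 < t j) ∧ (∀ j, M j ∈ C1 d) ∧ (∀ j, c j ∈ Xd d) ∧
      ∀ j, z j = (prodUpTo (fun k => NormedSpace.exp
        (((t k : ℂ) * Complex.I) • toC d (M k))) j).mulVec (toCv d (c j))}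

open scoped Topology

lemma _root_.exists_isOpen_inter_eq_of_mem_nhdsWithin {X : Type*} [TopologicalSpace X]
    {s A : Set X} (hsA : s ⊆ A) (h : ∀ x ∈ s, s ∈ 𝓝[A] x) :
    ∃ U, IsOpen U ∧ s = U ∩ A := by
  choose W hWo hxW hWs using fun x hx => mem_nhdsWithin.1 (h x hx)
  refine ⟨⋃ x, ⋃ hx : x ∈ s, W x hx, isOpen_iUnion fun x => isOpen_iUnion (hWo x), ?_⟩
  ext x
  refine ⟨fun hx => ⟨Set.mem_iUnion₂.2 ⟨x, hx, hxW x hx⟩, hsA hx⟩, fun ⟨hU, hxA⟩ => ?_⟩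
  obtain ⟨y, hy, hxy⟩ := Set.mem_iUnion₂.1 hU
  exact hWs y hy ⟨hxy, hxA⟩

section Exp

variable {m : Type*} [Fintype m] [DecidableEq m]

lemma _root_.Matrix.exp_smul_of_isIdempotentElem {P : Matrix m m ℂ} (hP : IsIdempotentElem P)
    (c : ℂ) :
    NormedSpace.exp (c • P) = 1 + (Complex.exp c - 1) • P := by
  have hsum : Summable fun n : ℕ => (n.factorial : ℂ)⁻¹ * c ^ n := by
    simpa [smul_eq_mul] using NormedSpace.expSeries_summable' (𝕂 := ℂ) (x := c)
  have hexp : Complex.exp c = ∑' n : ℕ, (n.factorial : ℂ)⁻¹ * c ^ n := by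
    rw [Complex.exp_eq_exp_ℂ, NormedSpace.exp_eq_tsum ℂ]; simp [smul_eq_mul]
  have hterm (n : ℕ) : (n.factorial : ℂ)⁻¹ • (c • P) ^ n
      = ((n.factorial : ℂ)⁻¹ * c ^ n) • P + if n = 0 then 1 - P else 0 := by
    cases n with
    | zero => simp
    | succ k => simp [smul_pow, hP.pow_succ_eq, smul_smul]
  rw [NormedSpace.exp_eq_tsum ℂ]
  dsimp only
  rw [tsum_congr hterm,
    (hsum.smul_const P).tsum_add (hasSum_ite_eq 0 (1 - P)).summable,
    hsum.tsum_smul_const, tsum_ite_eq, ← hexp]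
  module

/-- Splitting `L = I • (P - Q)` into orthogonal idempotents `P, Q` (the `± I`-eigenprojections of
`L`) turns `exp (τ • L)` into a product of two exponentials of idempotents. -/
lemma _root_.Matrix.exp_smul_of_mul_mul_self_eq_neg {L : Matrix m m ℂ} (hL : L * L * L = -L)
    (τ : ℂ) :
    NormedSpace.exp (τ • L) = 1 + Complex.sin τ • L + (1 - Complex.cos τ) • (L * L) := by
  have h4 : L * L * (L * L) = -(L * L) := by rw [← mul_assoc, hL, neg_mul]
  have h3' : L * (L * L) = -L := by rw [← mul_assoc, hL]
  set P := (-(1/2) : ℂ) • (L * L + I • L)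
  set Q := (-(1/2) : ℂ) • (L * L - I • L)
  have hP : IsIdempotentElem P := by
    simp only [IsIdempotentElem, P, add_mul, mul_add, smul_mul_assoc,
      mul_smul_comm, smul_smul, h4, hL, h3']
    match_scalars <;> grind [I_sq]
  have hQ : IsIdempotentElem Q := by
    simp only [IsIdempotentElem, Q, sub_mul, mul_sub, smul_mul_assoc,
      mul_smul_comm, smul_smul, h4, hL, h3']
    match_scalars <;> grind [I_sq]
  have hPQ : P * Q = 0 := by
    simp only [P, Q, add_mul, mul_sub, smul_mul_assoc,
      mul_smul_comm, smul_smul, h4, hL, h3']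
    match_scalars <;> grind [I_sq]
  have hQP : Q * P = 0 := by
    simp only [P, Q, sub_mul, mul_add, smul_mul_assoc,
      mul_smul_comm, smul_smul, h4, hL, h3']
    match_scalars <;> grind [I_sq]
  have hsplit : τ • L = (τ * I) • P + (-(τ * I)) • Q := by
    simp only [P, Q]
    match_scalars <;> grind [I_sq]
  have hcomm : Commute ((τ * I) • P) ((-(τ * I)) • Q) := by
    simp only [Commute, SemiconjBy, smul_mul_smul, hPQ, hQP, smul_zero]
  rw [hsplit, Matrix.exp_add_of_commute _ _ hcomm, exp_smul_of_isIdempotentElem hP,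
    exp_smul_of_isIdempotentElem hQ]
  simp only [mul_add, add_mul, mul_one, one_mul, smul_mul_smul, hPQ, smul_zero, add_zero,
    Complex.sin, Complex.cos, neg_mul, P, Q]
  module

end Exp

variable {d : ℕ}

section Forms

lemma formR_comm (x y : Fin (d+1) → ℝ) : formR d x y = formR d y x :=
  Finset.sum_congr rfl fun _ _ => by ring

lemma formR_add_right (x y y' : Fin (d+1) → ℝ) :
    formR d x (y + y') = formR d x y + formR d x y' := by
  simp [formR, mul_add, Finset.sum_add_distrib]

lemma formR_sub_right (x y y' : Fin (d+1) → ℝ) :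
    formR d x (y - y') = formR d x y - formR d x y' := by
  simp [formR, mul_sub, Finset.sum_sub_distrib]

lemma formR_smul_right (c : ℝ) (x y : Fin (d+1) → ℝ) :
    formR d x (c • y) = c * formR d x y := by
  simp only [formR, Finset.mul_sum, Pi.smul_apply, smul_eq_mul]
  exact Finset.sum_congr rfl fun _ _ => by ring

lemma formR_add_left (x x' y : Fin (d+1) → ℝ) :
    formR d (x + x') y = formR d x y + formR d x' y := by
  rw [formR_comm, formR_add_right, formR_comm y, formR_comm y]

lemma formR_sub_left (x x' y : Fin (d+1) → ℝ) :
    formR d (x - x') y = formR d x y - formR d x' y := by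
  rw [formR_comm, formR_sub_right, formR_comm y, formR_comm y]

lemma formR_smul_left (c : ℝ) (x y : Fin (d+1) → ℝ) :
    formR d (c • x) y = c * formR d x y := by
  rw [formR_comm, formR_smul_right, formR_comm y]

lemma formC_comm (z w : Fin (d+1) → ℂ) : formC d z w = formC d w z :=
  Finset.sum_congr rfl fun _ _ => by ring

lemma formC_add_right (z w w' : Fin (d+1) → ℂ) :
    formC d z (w + w') = formC d z w + formC d z w' := by
  simp [formC, mul_add, Finset.sum_add_distrib]

lemma formC_sub_right (z w w' : Fin (d+1) → ℂ) :
    formC d z (w - w') = formC d z w - formC d z w' := by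
  simp [formC, mul_sub, Finset.sum_sub_distrib]

lemma formC_smul_right (c : ℂ) (z w : Fin (d+1) → ℂ) :
    formC d z (c • w) = c * formC d z w := by
  simp only [formC, Finset.mul_sum, Pi.smul_apply, smul_eq_mul]
  exact Finset.sum_congr rfl fun _ _ => by ring

lemma formC_add_left (z z' w : Fin (d+1) → ℂ) :
    formC d (z + z') w = formC d z w + formC d z' w := by
  rw [formC_comm, formC_add_right, formC_comm w, formC_comm w]

lemma formC_sub_left (z z' w : Fin (d+1) → ℂ) :
    formC d (z - z') w = formC d z w - formC d z' w := by
  rw [formC_comm, formC_sub_right, formC_comm w, formC_comm w]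

lemma formC_smul_left (c : ℂ) (z w : Fin (d+1) → ℂ) :
    formC d (c • z) w = c * formC d z w := by
  rw [formC_comm, formC_smul_right, formC_comm w]

lemma formC_toCv (x y : Fin (d+1) → ℝ) :
    formC d (toCv d x) (toCv d y) = formR d x y := by
  simp [formC, formR, toCv]

end Forms

section ReIm

def vecRe (z : Fin (d+1) → ℂ) : Fin (d+1) → ℝ := fun μ => (z μ).re

def vecIm (z : Fin (d+1) → ℂ) : Fin (d+1) → ℝ := fun μ => (z μ).im

lemma toCv_vecRe_add_I_smul (z : Fin (d+1) → ℂ) :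
    toCv d (vecRe z) + I • toCv d (vecIm z) = z := by
  funext μ; simp [toCv, vecRe, vecIm, Complex.ext_iff]

lemma vecRe_toCv_add_I_smul (x y : Fin (d+1) → ℝ) : vecRe (toCv d x + I • toCv d y) = x := by
  funext μ; simp [toCv, vecRe]

lemma vecIm_toCv_add_I_smul (x y : Fin (d+1) → ℝ) : vecIm (toCv d x + I • toCv d y) = y := by
  funext μ; simp [toCv, vecIm]

lemma formR_vecRe_vecIm {z : Fin (d+1) → ℂ} (hz : z ∈ XdC d) :
    formR d (vecRe z) (vecIm z) = 0 := by
  have h : formC d z z = 1 := hz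
  rw [← toCv_vecRe_add_I_smul z] at h
  simp only [formC_add_left, formC_add_right, formC_smul_left, formC_smul_right,
    formC_toCv, formR_comm (vecIm z)] at h
  have him : formR d (vecRe z) (vecIm z) + formR d (vecRe z) (vecIm z) = 0 := by
    simpa using congrArg Complex.im h
  linarith

lemma continuous_vecRe : Continuous (vecRe (d := d)) := by unfold vecRe; fun_prop

lemma continuous_vecIm : Continuous (vecIm (d := d)) := by unfold vecIm; fun_prop

end ReIm

section Ell

lemma toC_ell_mulVec (a b : Fin (d+1) → ℝ) (ζ : Fin (d+1) → ℂ) :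
    toC d (ell d a b) *ᵥ ζ = formC d (toCv d b) ζ • toCv d a - formC d (toCv d a) ζ • toCv d b := by
  funext i
  simp only [toC, ell, toCv, mulVec, dotProduct, map_apply, of_apply, Pi.sub_apply,
    Pi.smul_apply, smul_eq_mul, formC, Finset.sum_mul, ← Finset.sum_sub_distrib]
  refine Finset.sum_congr rfl fun μ _ => ?_
  push_cast
  ring

variable {a b : Fin (d+1) → ℝ} (ha : formR d a a = 1) (hb : formR d b b = 1)
  (hab : formR d a b = 0)
include ha hb hab

lemma toC_ell_mul_mul_self :
    toC d (ell d a b) * toC d (ell d a b) * toC d (ell d a b) = -toC d (ell d a b) := by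
  refine ext_of_mulVec_single fun j => ?_
  simp only [← mulVec_mulVec, neg_mulVec, toC_ell_mulVec, mulVec_sub, mulVec_smul,
    formC_toCv, formR_comm b a, ha, hb, hab]
  module

end Ell

def imagExp (d : ℕ) (t : ℝ) (M : Matrix (Fin (d+1)) (Fin (d+1)) ℝ) :
    Matrix (Fin (d+1)) (Fin (d+1)) ℂ :=
  NormedSpace.exp (((t : ℂ) * I) • toC d M)

lemma imagExp_neg_mul_imagExp (t : ℝ) (M : Matrix (Fin (d+1)) (Fin (d+1)) ℝ) :
    imagExp d (-t) M * imagExp d t M = 1 := by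
  have h : (((-t : ℝ) : ℂ) * I) • toC d M = -(((t : ℂ) * I) • toC d M) := by push_cast; module
  rw [imagExp, imagExp, h,
    ← Matrix.exp_add_of_commute _ _ (Commute.refl (((t : ℂ) * I) • toC d M)).neg_left,
    neg_add_cancel, NormedSpace.exp_zero]

lemma imagExp_mul_imagExp_neg (t : ℝ) (M : Matrix (Fin (d+1)) (Fin (d+1)) ℝ) :
    imagExp d t M * imagExp d (-t) M = 1 := by
  simpa using imagExp_neg_mul_imagExp (-t) M

lemma continuous_imagExp : Continuous fun p : ℝ × Matrix (Fin (d+1)) (Fin (d+1)) ℝ =>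
    imagExp d p.1 p.2 := by
  have hexp : Continuous (NormedSpace.exp : Matrix (Fin (d+1)) (Fin (d+1)) ℂ → _) := by
    open scoped Norms.Operator in exact NormedSpace.exp_continuous
  have htoC : Continuous (toC d) := continuous_id.matrix_map Complex.continuous_ofReal
  exact hexp.comp (by fun_prop)

section ImagExpEll

variable {a b : Fin (d+1) → ℝ} (ha : formR d a a = 1) (hb : formR d b b = 1)
  (hab : formR d a b = 0)
include ha hb hab

lemma imagExp_ell (t : ℝ) :
    imagExp d t (ell d a b) = 1 + (Real.sinh t * I) • toC d (ell d a b)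
      + (1 - (Real.cosh t : ℂ)) • (toC d (ell d a b) * toC d (ell d a b)) := by
  rw [imagExp, exp_smul_of_mul_mul_self_eq_neg (toC_ell_mul_mul_self ha hb hab),
    Complex.sin_mul_I, Complex.cos_mul_I, ← ofReal_sinh, ← ofReal_cosh]

lemma imagExp_ell_mulVec (t : ℝ) (ζ : Fin (d+1) → ℂ) :
    imagExp d t (ell d a b) *ᵥ ζ = ζ
      + (Real.sinh t * I * formC d (toCv d b) ζ - (1 - Real.cosh t) * formC d (toCv d a) ζ)
        • toCv d a
      - (Real.sinh t * I * formC d (toCv d a) ζ + (1 - Real.cosh t) * formC d (toCv d b) ζ)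
        • toCv d b := by
  rw [imagExp_ell ha hb hab]
  simp only [add_mulVec, one_mulVec, smul_mulVec, ← mulVec_mulVec, toC_ell_mulVec, mulVec_sub,
    mulVec_smul, formC_toCv, formR_comm b a, ha, hb, hab]
  module

lemma formC_imagExp_ell_mulVec (t : ℝ) (ζ ξ : Fin (d+1) → ℂ) :
    formC d (imagExp d t (ell d a b) *ᵥ ζ) (imagExp d t (ell d a b) *ᵥ ξ) = formC d ζ ξ := by
  have hch : (Real.cosh t : ℂ) ^ 2 - (Real.sinh t : ℂ) ^ 2 = 1 := by
    exact_mod_cast Real.cosh_sq_sub_sinh_sq t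
  rw [imagExp_ell_mulVec ha hb hab, imagExp_ell_mulVec ha hb hab]
  simp only [formC_add_left, formC_add_right, formC_sub_left, formC_sub_right, formC_smul_left,
    formC_smul_right, formC_toCv, formR_comm b a, ha, hb, hab, formC_comm ζ (toCv d a),
    formC_comm ζ (toCv d b), ofReal_zero, ofReal_one]
  linear_combination (formC d (toCv d a) ζ * formC d (toCv d a) ξ
    + formC d (toCv d b) ζ * formC d (toCv d b) ξ) * (I_sq * (Real.sinh t : ℂ) ^ 2 + hch)

end ImagExpEll

lemma imagExp_mulVec_mem_XdC {M : Matrix (Fin (d+1)) (Fin (d+1)) ℝ} (hM : M ∈ C1 d) (t : ℝ)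
    {ζ : Fin (d+1) → ℂ} (hζ : ζ ∈ XdC d) : imagExp d t M *ᵥ ζ ∈ XdC d := by
  obtain ⟨a, b, ha, hb, hab, -, rfl⟩ := hM
  exact (formC_imagExp_ell_mulVec ha hb hab t ζ ζ).trans hζ

lemma toCv_mem_XdC {c : Fin (d+1) → ℝ} (hc : c ∈ Xd d) : toCv d c ∈ XdC d := by
  show formC d _ _ = 1
  rw [formC_toCv, show formR d c c = 1 from hc, ofReal_one]

section Tuboid

lemma prodUpTo_zero {n : ℕ} (A : Fin (n+1) → Matrix (Fin (d+1)) (Fin (d+1)) ℂ) :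
    prodUpTo A 0 = A 0 := by
  simp [prodUpTo, List.finRange_succ]

lemma prodUpTo_succ {n : ℕ} (A : Fin (n+1) → Matrix (Fin (d+1)) (Fin (d+1)) ℂ) (j : Fin n) :
    prodUpTo A j.succ = A 0 * prodUpTo (fun k => A k.succ) j := by
  simp [prodUpTo, List.finRange_succ, List.take_succ_cons, ← List.map_take, Function.comp_def]

lemma mem_Znplus_succ_iff {n : ℕ} {z : Fin (n+1) → Fin (d+1) → ℂ} :
    z ∈ Znplus d (n+1) ↔ ∃ t M c, 0 < t ∧ M ∈ C1 d ∧ c ∈ Xd d ∧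
      z 0 = imagExp d t M *ᵥ toCv d c ∧
      (fun j => imagExp d (-t) M *ᵥ z j.succ) ∈ Znplus d n := by
  constructor
  · rintro ⟨hz, t, M, c, ht, hM, hc, hzc⟩
    refine ⟨t 0, M 0, c 0, ht 0, hM 0, hc 0, by rw [hzc 0, prodUpTo_zero]; rfl,
      fun j => imagExp_mulVec_mem_XdC (hM 0) _ (hz j.succ), fun j => t j.succ, fun j => M j.succ,
      fun j => c j.succ, fun j => ht j.succ, fun j => hM j.succ, fun j => hc j.succ, fun j => ?_⟩
    dsimp only
    rw [hzc j.succ, prodUpTo_succ, mulVec_mulVec, ← mul_assoc]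
    exact congrArg (· *ᵥ _) ((congrArg (· * _) (imagExp_neg_mul_imagExp _ _)).trans (one_mul _))
  · rintro ⟨t₀, M₀, c₀, ht₀, hM₀, hc₀, hz₀, hw, t, M, c, ht, hM, hc, hwc⟩
    dsimp only at hw hwc
    have hsucc (j : Fin n) : z j.succ = imagExp d t₀ M₀ *ᵥ
        (imagExp d (-t₀) M₀ *ᵥ z j.succ) := by
      rw [mulVec_mulVec, imagExp_mul_imagExp_neg, one_mulVec]
    refine ⟨Fin.cases (hz₀ ▸ imagExp_mulVec_mem_XdC hM₀ _ (toCv_mem_XdC hc₀))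
        fun j => hsucc j ▸ imagExp_mulVec_mem_XdC hM₀ _ (hw j),
      Fin.cons t₀ t, Fin.cons M₀ M, Fin.cons c₀ c, Fin.cases ht₀ ht, Fin.cases hM₀ hM,
      Fin.cases hc₀ hc, Fin.cases (by rw [hz₀, prodUpTo_zero]; rfl) fun j => ?_⟩
    rw [hsucc j, hwc j, prodUpTo_succ, mulVec_mulVec]
    rfl

end Tuboid

section Signature

/-- The orientation condition in `C1` reads `0 < timeMinor a b`. -/
def timeMinor (a b : Fin (d+1) → ℝ) : ℝ := a 0 * b (Fin.last d) - a (Fin.last d) * b 0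

lemma formR_self_nonpos_of_time_eq_zero {w : Fin (d+1) → ℝ} (hw₀ : w 0 = 0)
    (hwd : w (Fin.last d) = 0) : formR d w w ≤ 0 := by
  refine Finset.sum_nonpos fun μ _ => ?_
  by_cases h : μ = 0 ∨ μ = Fin.last d
  · rcases h with rfl | rfl <;> simp [hw₀, hwd]
  · simp only [eta, if_neg h]
    nlinarith [mul_self_nonneg (w μ)]

/-- Subtract from `v` the combination of `a, b` with the same time coordinates. -/
lemma formR_self_nonpos_of_orthogonal {a b v : Fin (d+1) → ℝ} (ha : formR d a a = 1)
    (hb : formR d b b = 1) (hab : formR d a b = 0) (hκ : timeMinor a b ≠ 0)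
    (hva : formR d a v = 0) (hvb : formR d b v = 0) : formR d v v ≤ 0 := by
  set c₁ := (v 0 * b (Fin.last d) - v (Fin.last d) * b 0) / timeMinor a b
  set c₂ := (a 0 * v (Fin.last d) - a (Fin.last d) * v 0) / timeMinor a b
  have h₀ : v 0 - c₁ * a 0 - c₂ * b 0 = 0 := by
    simp only [c₁, c₂]; field_simp; unfold timeMinor; ring
  have hd : v (Fin.last d) - c₁ * a (Fin.last d) - c₂ * b (Fin.last d) = 0 := by
    simp only [c₁, c₂]; field_simp; unfold timeMinor; ring
  have hw := formR_self_nonpos_of_time_eq_zero (w := v - c₁ • a - c₂ • b) h₀ hd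
  simp only [formR_sub_left, formR_sub_right, formR_smul_left, formR_smul_right, ha, hb, hab,
    hva, hvb, formR_comm v, formR_comm b a] at hw
  nlinarith [sq_nonneg c₁, sq_nonneg c₂]

end Signature

section Normalize

/-- Meaningful only for `0 < formR d v v`; otherwise `√` and `⁻¹` make it `0`. -/
def normalize (v : Fin (d+1) → ℝ) : Fin (d+1) → ℝ := (√(formR d v v))⁻¹ • v

lemma formR_normalize_self {v : Fin (d+1) → ℝ} (hv : 0 < formR d v v) :
    formR d (normalize v) (normalize v) = 1 := by
  rw [normalize, formR_smul_left, formR_smul_right, ← mul_assoc, ← mul_inv,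
    Real.mul_self_sqrt hv.le, inv_mul_cancel₀ hv.ne']

lemma normalize_smul {k : ℝ} (hk : 0 < k) (v : Fin (d+1) → ℝ) :
    normalize (k • v) = normalize v := by
  rw [normalize, normalize, formR_smul_left, formR_smul_right, ← mul_assoc,
    Real.sqrt_mul (mul_self_nonneg k), Real.sqrt_mul_self hk.le, smul_smul, mul_inv,
    mul_comm k⁻¹, mul_assoc, inv_mul_cancel₀ hk.ne', mul_one]

lemma continuousAt_normalize {v : Fin (d+1) → ℝ} (hv : 0 < formR d v v) :
    ContinuousAt normalize v := by
  have : √(formR d v v) ≠ 0 := (Real.sqrt_pos.2 hv).ne'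
  unfold normalize formR
  fun_prop (disch := assumption)

end Normalize

section Arcoth

/-- The inverse of `coth` on `(1, ∞)`. -/
def arcoth (l : ℝ) : ℝ := Real.arsinh (√(l ^ 2 - 1))⁻¹

lemma sinh_arcoth (l : ℝ) : Real.sinh (arcoth l) = (√(l ^ 2 - 1))⁻¹ := Real.sinh_arsinh _

lemma cosh_arcoth {l : ℝ} (hl : 1 < l) : Real.cosh (arcoth l) = l * (√(l ^ 2 - 1))⁻¹ := by
  have hl2 : 0 < l ^ 2 - 1 := by nlinarith
  have hsq : 1 + ((√(l ^ 2 - 1))⁻¹) ^ 2 = (l * (√(l ^ 2 - 1))⁻¹) ^ 2 := by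
    rw [mul_pow, inv_pow, Real.sq_sqrt hl2.le]
    field_simp
    ring
  rw [arcoth, Real.cosh_arsinh, hsq, Real.sqrt_sq (by positivity)]

lemma arcoth_pos {l : ℝ} (hl : 1 < l) : 0 < arcoth l :=
  Real.arsinh_pos_iff.2 (inv_pos.2 (Real.sqrt_pos.2 (by nlinarith)))

lemma arcoth_coth {t : ℝ} (ht : 0 < t) : arcoth (Real.cosh t / Real.sinh t) = t := by
  have hs := Real.sinh_pos_iff.2 ht
  have h : (Real.cosh t / Real.sinh t) ^ 2 - 1 = ((Real.sinh t)⁻¹) ^ 2 := by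
    field_simp
    linear_combination Real.cosh_sq_sub_sinh_sq t
  rw [arcoth, h, Real.sqrt_sq (by positivity), inv_inv, Real.arsinh_sinh]

end Arcoth

section LocalSection

/-! For `ζ = x + i y` near a point of `Z_{1+}`, a plane `span (a, b)`, a time `t` and a real point
`c` with `ζ = exp (i t ℓ(a ∧ b)) c` are read off continuously from `ζ`: `a` is the direction of
`y`, `b` the normalised projection of a fixed reference vector `e` orthogonally to `a`,
`coth t = ⟨x, b⟩ / √⟨y, y⟩` and `c = x + √⟨y, y⟩ (1 / sinh t - coth t) b`. -/

variable (e : Fin (d+1) → ℝ)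

def imagDir (ζ : Fin (d+1) → ℂ) : Fin (d+1) → ℝ := normalize (vecIm ζ)

def planeVec (ζ : Fin (d+1) → ℂ) : Fin (d+1) → ℝ := e - formR d e (imagDir ζ) • imagDir ζ

def planeDir (ζ : Fin (d+1) → ℂ) : Fin (d+1) → ℝ := normalize (planeVec e ζ)

def cothTime (ζ : Fin (d+1) → ℂ) : ℝ :=
  formR d (vecRe ζ) (planeDir e ζ) / √(formR d (vecIm ζ) (vecIm ζ))

def realPoint (ζ : Fin (d+1) → ℂ) : Fin (d+1) → ℝ :=
  vecRe ζ + (√(formR d (vecIm ζ) (vecIm ζ)) * (√(cothTime e ζ ^ 2 - 1) - cothTime e ζ))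
    • planeDir e ζ

/-- The open conditions under which the construction above is valid. -/
def IsAdapted (ζ : Fin (d+1) → ℂ) : Prop :=
  0 < formR d (vecIm ζ) (vecIm ζ) ∧ 0 < formR d (planeVec e ζ) (planeVec e ζ) ∧
    1 < cothTime e ζ ∧ 0 < timeMinor (imagDir ζ) (planeDir e ζ)

variable {e} {ζ : Fin (d+1) → ℂ}

lemma formR_imagDir_self (hs : 0 < formR d (vecIm ζ) (vecIm ζ)) :
    formR d (imagDir ζ) (imagDir ζ) = 1 :=
  formR_normalize_self hs

lemma formR_planeDir_self (hq : 0 < formR d (planeVec e ζ) (planeVec e ζ)) :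
    formR d (planeDir e ζ) (planeDir e ζ) = 1 :=
  formR_normalize_self hq

lemma formR_imagDir_planeDir (hs : 0 < formR d (vecIm ζ) (vecIm ζ)) :
    formR d (imagDir ζ) (planeDir e ζ) = 0 := by
  have h : formR d (imagDir ζ) (planeVec e ζ) = 0 := by
    rw [planeVec, formR_sub_right, formR_smul_right, formR_imagDir_self hs, formR_comm e]
    ring
  rw [planeDir, normalize, formR_smul_right, h, mul_zero]

lemma imagExp_realPoint (hζ : ζ ∈ XdC d) (h : IsAdapted e ζ) :
    imagExp d (arcoth (cothTime e ζ)) (ell d (imagDir ζ) (planeDir e ζ)) *ᵥ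
      toCv d (realPoint e ζ) = ζ := by
  obtain ⟨hs, hq, hl, -⟩ := h
  rw [realPoint]
  have ha := formR_imagDir_self hs
  have hb := formR_planeDir_self (e := e) hq
  have hab := formR_imagDir_planeDir (e := e) hs
  set ρ := √(formR d (vecIm ζ) (vecIm ζ))
  set l := cothTime e ζ
  have hρ : 0 < ρ := Real.sqrt_pos.2 hs
  have hδ : 0 < √(l ^ 2 - 1) := Real.sqrt_pos.2 (by nlinarith)
  have hy : vecIm ζ = ρ • imagDir ζ := by
    rw [imagDir, normalize, smul_smul, mul_inv_cancel₀ hρ.ne', one_smul]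
  have hxa : formR d (imagDir ζ) (vecRe ζ) = 0 := by
    rw [imagDir, normalize, formR_smul_left, formR_comm (vecIm ζ) (vecRe ζ),
      formR_vecRe_vecIm hζ, mul_zero]
  have hxb : formR d (planeDir e ζ) (vecRe ζ) = l * ρ := by
    rw [formR_comm]; exact (div_mul_cancel₀ _ hρ.ne').symm
  simp only [imagExp_ell_mulVec ha hb hab, formC_toCv, formR_add_right, formR_smul_right, hab,
    hb, hxa, hxb, sinh_arcoth, cosh_arcoth hl]
  conv_rhs => rw [← toCv_vecRe_add_I_smul ζ, hy]
  funext i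
  simp only [toCv, Pi.add_apply, Pi.sub_apply, Pi.smul_apply, smul_eq_mul]
  have hδ' : (√(l ^ 2 - 1) : ℂ) ≠ 0 := by exact_mod_cast hδ.ne'
  push_cast
  field_simp
  ring

lemma realPoint_mem_Xd (hζ : ζ ∈ XdC d) (h : IsAdapted e ζ) : realPoint e ζ ∈ Xd d := by
  have hpres := formC_imagExp_ell_mulVec (formR_imagDir_self h.1) (formR_planeDir_self h.2.1)
    (formR_imagDir_planeDir h.1) (arcoth (cothTime e ζ)) (toCv d (realPoint e ζ))
    (toCv d (realPoint e ζ))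
  rw [imagExp_realPoint hζ h, show formC d ζ ζ = 1 from hζ, formC_toCv] at hpres
  exact_mod_cast hpres.symm

lemma ell_imagDir_planeDir_mem_C1 (h : IsAdapted e ζ) :
    ell d (imagDir ζ) (planeDir e ζ) ∈ C1 d :=
  ⟨_, _, formR_imagDir_self h.1, formR_planeDir_self h.2.1, formR_imagDir_planeDir h.1,
    h.2.2.2, rfl⟩

end LocalSection

section BasePoint

lemma ell_smul_smul (k k' : ℝ) (a b : Fin (d+1) → ℝ) :
    ell d (k • a) (k' • b) = (k * k') • ell d a b := by
  ext i j
  simp only [ell, of_apply, Pi.smul_apply, smul_eq_mul, Matrix.smul_apply]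
  ring

lemma ell_rotate (α β : ℝ) (a b : Fin (d+1) → ℝ) :
    ell d (β • a - α • b) (α • a + β • b) = (α ^ 2 + β ^ 2) • ell d a b := by
  ext i j
  simp only [ell, of_apply, Pi.smul_apply, Pi.add_apply, Pi.sub_apply, smul_eq_mul,
    Matrix.smul_apply]
  ring

lemma timeMinor_smul_smul (k k' : ℝ) (a b : Fin (d+1) → ℝ) :
    timeMinor (k • a) (k' • b) = (k * k') * timeMinor a b := by
  simp only [timeMinor, Pi.smul_apply, smul_eq_mul]
  ring

lemma timeMinor_rotate (α β : ℝ) (a b : Fin (d+1) → ℝ) :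
    timeMinor (β • a - α • b) (α • a + β • b) = (α ^ 2 + β ^ 2) * timeMinor a b := by
  simp only [timeMinor, Pi.smul_apply, Pi.add_apply, Pi.sub_apply, smul_eq_mul]
  ring

variable {a b c : Fin (d+1) → ℝ} (ha : formR d a a = 1) (hb : formR d b b = 1)
  (hab : formR d a b = 0)
include ha hb hab

lemma formR_smul_sub_smul_self (α β : ℝ) :
    formR d (β • a - α • b) (β • a - α • b) = α ^ 2 + β ^ 2 := by
  simp only [formR_sub_left, formR_sub_right, formR_smul_left, formR_smul_right, ha, hb, hab,
    formR_comm b a]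
  ring

lemma formR_smul_add_smul_self (α β : ℝ) :
    formR d (α • a + β • b) (α • a + β • b) = α ^ 2 + β ^ 2 := by
  simp only [formR_add_left, formR_add_right, formR_smul_left, formR_smul_right, ha, hb, hab,
    formR_comm b a]
  ring

lemma formR_smul_add_smul_smul_sub_smul (α β : ℝ) :
    formR d (α • a + β • b) (β • a - α • b) = 0 := by
  simp only [formR_add_left, formR_sub_right, formR_smul_left, formR_smul_right, ha, hb, hab,
    formR_comm b a]
  ring

lemma one_le_sq_add_sq (hκ : timeMinor a b ≠ 0) (hc : formR d c c = 1) :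
    1 ≤ formR d a c ^ 2 + formR d b c ^ 2 := by
  have h := formR_self_nonpos_of_orthogonal (v := c - (formR d a c • a + formR d b c • b))
    ha hb hab hκ
    (by simp only [formR_sub_right, formR_add_right, formR_smul_right, ha, hab]; ring)
    (by simp only [formR_sub_right, formR_add_right, formR_smul_right, hb, formR_comm b a, hab]
        ring)
  simp only [formR_sub_left, formR_sub_right, formR_add_left, formR_add_right, formR_smul_left,
    formR_smul_right, ha, hb, hab, hc, formR_comm b a, formR_comm c a, formR_comm c b] at h
  nlinarith

lemma imagExp_ell_mulVec_toCv (t : ℝ) (c : Fin (d+1) → ℝ) :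
    imagExp d t (ell d a b) *ᵥ toCv d c =
      toCv d (c + (Real.cosh t - 1) • (formR d a c • a + formR d b c • b))
        + I • toCv d (Real.sinh t • (formR d b c • a - formR d a c • b)) := by
  rw [imagExp_ell_mulVec ha hb hab, formC_toCv, formC_toCv]
  funext i
  simp only [toCv, Pi.add_apply, Pi.sub_apply, Pi.smul_apply, smul_eq_mul]
  push_cast
  ring

/-- The reference vector is the projection of `c` on `span (a, b)`. -/
lemma exists_isAdapted {t₀ : ℝ} {ζ₀ : Fin (d+1) → ℂ} (ht₀ : 0 < t₀) (hκ : 0 < timeMinor a b)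
    (hc : c ∈ Xd d) (hζ₀ : ζ₀ = imagExp d t₀ (ell d a b) *ᵥ toCv d c) :
    ∃ e, IsAdapted e ζ₀ ∧ arcoth (cothTime e ζ₀) = t₀ ∧
      ell d (imagDir ζ₀) (planeDir e ζ₀) = ell d a b := by
  rw [imagExp_ell_mulVec_toCv ha hb hab] at hζ₀
  set α := formR d a c
  set β := formR d b c
  set u := β • a - α • b
  set w := α • a + β • b
  have hr : 0 < α ^ 2 + β ^ 2 := one_pos.trans_le (one_le_sq_add_sq ha hb hab hκ.ne' hc)
  have hsh : 0 < Real.sinh t₀ := Real.sinh_pos_iff.2 ht₀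
  have hre : vecRe ζ₀ = c + (Real.cosh t₀ - 1) • w := by rw [hζ₀, vecRe_toCv_add_I_smul]
  have him : vecIm ζ₀ = Real.sinh t₀ • u := by rw [hζ₀, vecIm_toCv_add_I_smul]
  have huu := formR_smul_sub_smul_self ha hb hab α β
  have hww := formR_smul_add_smul_self ha hb hab α β
  have hwu := formR_smul_add_smul_smul_sub_smul ha hb hab α β
  have hcw : formR d c w = α ^ 2 + β ^ 2 := by
    simp only [w, formR_add_right, formR_smul_right, formR_comm c a, formR_comm c b]; ring
  set ρ := √(α ^ 2 + β ^ 2)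
  have hρ : 0 < ρ := Real.sqrt_pos.2 hr
  have hρρ : ρ * ρ = α ^ 2 + β ^ 2 := Real.mul_self_sqrt hr.le
  have hdir : imagDir ζ₀ = ρ⁻¹ • u := by rw [imagDir, him, normalize_smul hsh, normalize, huu]
  have hvec : planeVec w ζ₀ = w := by
    rw [planeVec, hdir, formR_smul_right, hwu, mul_zero, zero_smul, sub_zero]
  have hplane : planeDir w ζ₀ = ρ⁻¹ • w := by rw [planeDir, hvec, normalize, hww]
  have hs : formR d (vecIm ζ₀) (vecIm ζ₀) = (Real.sinh t₀ * ρ) ^ 2 := by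
    rw [him, formR_smul_left, formR_smul_right, huu, mul_pow, Real.sq_sqrt hr.le]; ring
  have hcoth : cothTime w ζ₀ = Real.cosh t₀ / Real.sinh t₀ := by
    rw [cothTime, hre, hplane, hs, Real.sqrt_sq (by positivity), formR_smul_right,
      formR_add_left, formR_smul_left, hcw, hww]
    field_simp
    linear_combination (-Real.cosh t₀) * hρρ
  refine ⟨w, ⟨hs ▸ by positivity, by rw [hvec, hww]; exact hr, ?_, ?_⟩, hcoth ▸ arcoth_coth ht₀, ?_⟩
  · rw [hcoth, one_lt_div hsh]
    exact Real.sinh_lt_cosh t₀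
  · rw [hdir, hplane, timeMinor_smul_smul, timeMinor_rotate, ← hρρ]
    field_simp
    exact hκ
  · rw [hdir, hplane, ell_smul_smul, ell_rotate, smul_smul, ← hρρ]
    field_simp
    rw [one_smul]

end BasePoint

section Continuity

@[fun_prop]
lemma _root_.Continuous.formR {α : Type*} [TopologicalSpace α] {f g : α → Fin (d+1) → ℝ}
    (hf : Continuous f) (hg : Continuous g) : Continuous fun x => formR d (f x) (g x) := by
  unfold AdS.formR; fun_prop

@[fun_prop]
lemma _root_.ContinuousAt.formR {α : Type*} [TopologicalSpace α] {f g : α → Fin (d+1) → ℝ}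
    {x : α} (hf : ContinuousAt f x) (hg : ContinuousAt g x) :
    ContinuousAt (fun x => formR d (f x) (g x)) x :=
  (continuous_fst.formR continuous_snd).continuousAt.comp (hf.prodMk hg)

lemma continuous_ell : Continuous fun p : (Fin (d+1) → ℝ) × (Fin (d+1) → ℝ) => ell d p.1 p.2 :=
  continuous_pi fun _ => continuous_pi fun _ => by simp only [ell, of_apply]; fun_prop

lemma continuous_timeMinor :
    Continuous fun p : (Fin (d+1) → ℝ) × (Fin (d+1) → ℝ) => timeMinor p.1 p.2 := by
  unfold timeMinor; fun_prop

attribute [fun_prop] continuous_vecRe continuous_vecIm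

variable {e : Fin (d+1) → ℝ} {ζ₀ : Fin (d+1) → ℂ}

lemma continuousAt_imagDir (hs : 0 < formR d (vecIm ζ₀) (vecIm ζ₀)) :
    ContinuousAt imagDir ζ₀ :=
  (continuousAt_normalize hs).comp continuous_vecIm.continuousAt

lemma continuousAt_planeDir (hs : 0 < formR d (vecIm ζ₀) (vecIm ζ₀))
    (hq : 0 < formR d (planeVec e ζ₀) (planeVec e ζ₀)) : ContinuousAt (planeDir e) ζ₀ := by
  have := continuousAt_imagDir hs
  exact (continuousAt_normalize hq).comp (by unfold planeVec; fun_prop)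

lemma continuousAt_cothTime (hs : 0 < formR d (vecIm ζ₀) (vecIm ζ₀))
    (hq : 0 < formR d (planeVec e ζ₀) (planeVec e ζ₀)) : ContinuousAt (cothTime e) ζ₀ := by
  have := continuousAt_planeDir hs hq
  have : √(formR d (vecIm ζ₀) (vecIm ζ₀)) ≠ 0 := (Real.sqrt_pos.2 hs).ne'
  unfold cothTime
  fun_prop (disch := assumption)

lemma eventually_isAdapted (h : IsAdapted e ζ₀) : ∀ᶠ ζ in 𝓝 ζ₀, IsAdapted e ζ := by
  obtain ⟨hs, hq, hl, hκ⟩ := h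
  have hdir := continuousAt_imagDir hs
  have hplane := continuousAt_planeDir (e := e) hs hq
  have hvec : ContinuousAt (planeVec e) ζ₀ := by unfold planeVec; fun_prop
  have hminor : ContinuousAt (fun ζ => timeMinor (imagDir ζ) (planeDir e ζ)) ζ₀ :=
    continuous_timeMinor.continuousAt.comp (hdir.prodMk hplane)
  filter_upwards [continuousAt_const.eventually_lt
      (continuous_vecIm.formR continuous_vecIm).continuousAt hs,
    continuousAt_const.eventually_lt (hvec.formR hvec) hq,
    continuousAt_const.eventually_lt (continuousAt_cothTime hs hq) hl,
    continuousAt_const.eventually_lt hminor hκ] with ζ h₁ h₂ h₃ h₄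
  exact ⟨h₁, h₂, h₃, h₄⟩

lemma continuousAt_imagExp_neg_arcoth (h : IsAdapted e ζ₀) :
    ContinuousAt (fun ζ => imagExp d (-arcoth (cothTime e ζ)) (ell d (imagDir ζ) (planeDir e ζ)))
      ζ₀ := by
  obtain ⟨hs, hq, hl, -⟩ := h
  have hcoth := continuousAt_cothTime (e := e) hs hq
  have hδ : √(cothTime e ζ₀ ^ 2 - 1) ≠ 0 := (Real.sqrt_pos.2 (by nlinarith)).ne'
  have htime : ContinuousAt (fun ζ => arcoth (cothTime e ζ)) ζ₀ := by
    unfold arcoth; fun_prop (disch := assumption)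
  exact continuous_imagExp.continuousAt.comp (htime.neg.prodMk (continuous_ell.continuousAt.comp
    ((continuousAt_imagDir hs).prodMk (continuousAt_planeDir hs hq))))

end Continuity

section Openness

lemma exists_local_section {t₀ : ℝ} {M₀ : Matrix (Fin (d+1)) (Fin (d+1)) ℝ}
    {c₀ : Fin (d+1) → ℝ} {ζ₀ : Fin (d+1) → ℂ} (ht₀ : 0 < t₀) (hM₀ : M₀ ∈ C1 d)
    (hc₀ : c₀ ∈ Xd d) (hζ₀ : ζ₀ = imagExp d t₀ M₀ *ᵥ toCv d c₀) :
    ∃ g : (Fin (d+1) → ℂ) → Matrix (Fin (d+1)) (Fin (d+1)) ℂ,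
      ContinuousAt g ζ₀ ∧ g ζ₀ = imagExp d (-t₀) M₀ ∧
      ∀ᶠ ζ in 𝓝 ζ₀, ζ ∈ XdC d → ∃ t M c, 0 < t ∧ M ∈ C1 d ∧ c ∈ Xd d ∧
        ζ = imagExp d t M *ᵥ toCv d c ∧ g ζ = imagExp d (-t) M := by
  obtain ⟨a, b, ha, hb, hab, hκ, rfl⟩ := hM₀
  obtain ⟨e, he, htime, hplane⟩ := exists_isAdapted ha hb hab ht₀ hκ hc₀ hζ₀
  refine ⟨fun ζ => imagExp d (-arcoth (cothTime e ζ)) (ell d (imagDir ζ) (planeDir e ζ)),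
    continuousAt_imagExp_neg_arcoth he, by simp only [htime, hplane], ?_⟩
  filter_upwards [eventually_isAdapted he] with ζ hζe hζ
  exact ⟨_, _, _, arcoth_pos hζe.2.2.1, ell_imagDir_planeDir_mem_C1 hζe, realPoint_mem_Xd hζ hζe,
    (imagExp_realPoint hζ hζe).symm, rfl⟩

lemma Znplus_mem_nhdsWithin (n : ℕ) {z : Fin n → Fin (d+1) → ℂ} (hz : z ∈ Znplus d n) :
    Znplus d n ∈ 𝓝[{z | ∀ j, z j ∈ XdC d}] z := by
  induction n with
  | zero =>
    exact Filter.mem_of_superset self_mem_nhdsWithin fun z' hz' =>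
      ⟨hz', Fin.elim0, Fin.elim0, Fin.elim0, fun j => j.elim0, fun j => j.elim0,
        fun j => j.elim0, fun j => j.elim0⟩
  | succ n ih =>
    obtain ⟨t₀, M₀, c₀, ht₀, hM₀, hc₀, hz₀, htail⟩ := mem_Znplus_succ_iff.1 hz
    obtain ⟨g, hg, hgz, hsec⟩ := exists_local_section ht₀ hM₀ hc₀ hz₀
    set T : (Fin (n+1) → Fin (d+1) → ℂ) → Fin n → Fin (d+1) → ℂ :=
      fun z' j => g (z' 0) *ᵥ z' j.succ
    have hTz : T z = fun j => imagExp d (-t₀) M₀ *ᵥ z j.succ := by simp only [T, hgz]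
    have hT : ContinuousAt T z := by
      have hg0 : ContinuousAt (fun z' : Fin (n+1) → Fin (d+1) → ℂ => g (z' 0)) z :=
        hg.comp_of_eq (continuous_apply 0).continuousAt rfl
      exact continuousAt_pi.2 fun j =>
        (continuous_fst.matrix_mulVec continuous_snd).continuousAt.comp
          (hg0.prodMk (continuous_apply j.succ).continuousAt)
    rw [mem_nhdsWithin_iff_eventually]
    filter_upwards [hT.eventually (hTz ▸ mem_nhdsWithin_iff_eventually.1 (ih htail)),
      (continuous_apply 0).continuousAt.eventually hsec] with z' hz'T hz'0 hz'
    obtain ⟨t, M, c, ht, hM, hc, hz'c, hgz'⟩ := hz'0 (hz' 0)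
    refine mem_Znplus_succ_iff.2 ⟨t, M, c, ht, hM, hc, hz'c, ?_⟩
    have hT' : T z' = fun j => imagExp d (-t) M *ᵥ z' j.succ := by simp only [T, hgz']
    exact hT' ▸ hz'T fun j => hT' ▸ imagExp_mulVec_mem_XdC hM _ (hz' j.succ)

end Openness

theorem Znplus_isOpen_general (d n : ℕ) :
    ∃ U : Set (Fin n → (Fin (d+1) → ℂ)), IsOpen U ∧
      Znplus d n = U ∩ {z | ∀ j, z j ∈ XdC d} :=
  exists_isOpen_inter_eq_of_mem_nhdsWithin (fun _ hz => hz.1) fun _ => Znplus_mem_nhdsWithin n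

/-- `Z_{n+}` is open in `(X_d^{(c)})ⁿ` for the topology induced from
`(ℂ^{d+1})ⁿ`, i.e. it is the trace on `(X_d^{(c)})ⁿ` of an open set. -/
theorem Znplus_isOpen (d n : ℕ) (hd : 2 ≤ d) (hn : 1 ≤ n) :
    ∃ U : Set (Fin n → (Fin (d+1) → ℂ)), IsOpen U ∧
      Znplus d n = U ∩ {z | ∀ j, z j ∈ XdC d} :=
  Znplus_isOpen_general d n

end AdS
end
end
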